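/- Fix a codeword x ∈ C and a received pair vector ŷ ∈ (Σ²)^n; set λ = Λ(ŷ) and λ⁰ = Λ(ŷ₀). (i) For every feasible (x^f,τ^f) ∈ P(H) with x^f ≠ x there exists a feasible (x^r,τ^r) ∈ P(H) with x^r ≠ 0 and ⟨λ, τ^f − T(x)⟩ = ⟨λ⁰, τ^r − T(0)⟩. (ii) Conversely, for every feasible (x^r,τ^r) ∈ P(H) with x^r ≠ 0 there exists a feasible (x^f,τ^f) ∈ P(H) with x^f ≠ x and ⟨λ⁰, τ^r − T(0)⟩ = ⟨λ, τ^f − T(x)⟩. -/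

import Mathlib

open scoped BigOperators

/-- Symbol pairs: elements of Σ² with Σ = {0,1} represented as `ZMod 2`. -/
abbrev Pair := ZMod 2 × ZMod 2

/-- Cyclic successor index: `i + 1 (mod n)`. -/
def nxt {n : ℕ} (i : Fin n) : Fin n := ⟨(i.val + 1) % n, Nat.mod_lt _ i.pos⟩

/-- Embedding of a binary vector into `ℝ^n`. -/
def emb {n : ℕ} (x : Fin n → ZMod 2) : Fin n → ℝ := fun i => ((x i).val : ℝ)

/-- The binary linear code with parity-check matrix `H`. -/
def code {m n : ℕ} (H : Fin m → Fin n → ZMod 2) : Set (Fin n → ZMod 2) :=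
  {x | ∀ j, ∑ i, H j i * x i = 0}

/-- The local (single parity check) code of row `j` of `H`. -/
def localCode {m n : ℕ} (H : Fin m → Fin n → ZMod 2) (j : Fin m) : Set (Fin n → ZMod 2) :=
  {x | ∑ i, H j i * x i = 0}

/-- The fundamental polytope `Q(H)`: intersection of convex hulls of local codes. -/
def fundPolytope {m n : ℕ} (H : Fin m → Fin n → ZMod 2) : Set (Fin n → ℝ) :=
  ⋂ j, convexHull ℝ (emb '' localCode H j)

/-- The LP feasible region `P(H)` of pairs `(x, τ)`. -/
def feasible {m n : ℕ} (H : Fin m → Fin n → ZMod 2) :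
    Set ((Fin n → ℝ) × (Fin n → Pair → ℝ)) :=
  {xt | (∀ i ab, xt.2 i ab ∈ Set.Icc (0 : ℝ) 1) ∧
        (∀ i, ∑ ab : Pair, xt.2 i ab = 1) ∧
        (∀ i, xt.1 i = xt.2 i (1, 0) + xt.2 i (1, 1)) ∧
        (∀ i, xt.1 (nxt i) = xt.2 i (0, 1) + xt.2 i (1, 1)) ∧
        xt.1 ∈ fundPolytope H}

/-- `T(x)`: the indicator vector of the symbol-pair read vector `π(x)`. -/
def indic {n : ℕ} (x : Fin n → ZMod 2) : Fin n → Pair → ℝ :=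
  fun i ab => if (x i, x (nxt i)) = ab then 1 else 0

/-- Channel transition probability `p(y | a)` of the symbol-pair read channel. -/
noncomputable def chan (p : ℝ) (y a : Pair) : ℝ := if y = a then 1 - p else p / 3

/-- Likelihood `p(ŷ | x)` of the received pair vector `ŷ` given codeword `x`. -/
noncomputable def lik {n : ℕ} (p : ℝ) (y : Fin n → Pair) (x : Fin n → ZMod 2) : ℝ :=
  ∏ i, chan p (y i) (x i, x (nxt i))

/-- The cost vector `λ = Λ(ŷ)`, `λ_{i,(a,b)} = -ln p(ŷ_i | (a,b))`. -/
noncomputable def Lam {n : ℕ} (p : ℝ) (y : Fin n → Pair) : Fin n → Pair → ℝ :=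
  fun i ab => -Real.log (chan p (y i) ab)

/-- The pairing `⟨λ, τ⟩ = Σ_i Σ_{(a,b)} λ_{i,(a,b)} τ_{i,(a,b)}`. -/
def innerP {n : ℕ} (l t : Fin n → Pair → ℝ) : ℝ := ∑ i, ∑ ab : Pair, l i ab * t i ab

/-- The fractional pair weight `W_fp`. -/
def Wfp {n : ℕ} (x : Fin n → ℝ) : ℝ := ∑ i, max (x i) (x (nxt i))

/-- The set `B(x)` of received vectors causing LP decoding failure when `x` was sent. -/
def Bset {m n : ℕ} (H : Fin m → Fin n → ZMod 2) (p : ℝ) (x : Fin n → ZMod 2) :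
    Set (Fin n → Pair) :=
  {y | ∃ xt ∈ feasible H, xt.1 ≠ emb x ∧ innerP (Lam p y) xt.2 ≤ innerP (Lam p y) (indic x)}

/-!
Adding the codeword `x` is a symmetry of the whole problem. On `ℝ^n` it acts by the affine
involution `v ↦ (i ↦ if x i = 0 then v i else 1 - v i)`, which permutes the vertices of every
local polytope (a local code is closed under adding `x`) and hence preserves `Q(H)`; on the
pseudo-marginals it relabels `τ_i` by `(a,b) ↦ (a,b) ⊕ π(x)_i`, which is compatible with the
consistency constraints. Since the symbol-pair channel satisfies `p(u ⊕ w | v ⊕ w) = p(u | v)`,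
the cost `⟨Λ(ŷ), τ⟩` equals `⟨Λ(ŷ₀), τ'⟩` for the relabelled `τ'`, and the relabelling sends
`T(x)` to `T(0)`. The involution swaps `x` and `0`, so it matches the two families of feasible
points in both directions.
-/

lemma zmod_two_eq_zero_or_one (a : ZMod 2) : a = 0 ∨ a = 1 := by revert a; decide

lemma zmod_two_val_add_cast (a b : ZMod 2) :
    (((a + b).val : ℕ) : ℝ) = if b = 0 then (a.val : ℝ) else 1 - a.val := by
  rcases zmod_two_eq_zero_or_one a with rfl | rfl <;>
    rcases zmod_two_eq_zero_or_one b with rfl | rfl <;>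
    simp only [add_zero, zero_add, show (1 : ZMod 2) + 1 = 0 from rfl] <;> norm_num [ZMod.val_one]

lemma sum_pair_eq (f : Pair → ℝ) : ∑ ab, f ab = f (0, 0) + f (0, 1) + f (1, 0) + f (1, 1) := by
  rw [show (Finset.univ : Finset Pair) = {(0, 0), (0, 1), (1, 0), (1, 1)} from by decide]
  rw [Finset.sum_insert (by decide), Finset.sum_insert (by decide), Finset.sum_insert (by decide),
    Finset.sum_singleton]
  ring

lemma fst_marginal_add {f : Pair → ℝ} (hf : ∑ ab, f ab = 1) (w : Pair) :
    f ((1, 0) + w) + f ((1, 1) + w) =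
      if w.1 = 0 then f (1, 0) + f (1, 1) else 1 - (f (1, 0) + f (1, 1)) := by
  rw [sum_pair_eq] at hf
  obtain ⟨a, b⟩ := w
  rcases zmod_two_eq_zero_or_one a with rfl | rfl <;>
    rcases zmod_two_eq_zero_or_one b with rfl | rfl <;>
    simp only [Prod.mk_add_mk, add_zero, zero_add, show (1 : ZMod 2) + 1 = 0 from rfl, if_pos,
      if_neg, one_ne_zero, not_false_eq_true] <;> linarith

lemma snd_marginal_add {f : Pair → ℝ} (hf : ∑ ab, f ab = 1) (w : Pair) :
    f ((0, 1) + w) + f ((1, 1) + w) =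
      if w.2 = 0 then f (0, 1) + f (1, 1) else 1 - (f (0, 1) + f (1, 1)) := by
  rw [sum_pair_eq] at hf
  obtain ⟨a, b⟩ := w
  rcases zmod_two_eq_zero_or_one a with rfl | rfl <;>
    rcases zmod_two_eq_zero_or_one b with rfl | rfl <;>
    simp only [Prod.mk_add_mk, add_zero, zero_add, show (1 : ZMod 2) + 1 = 0 from rfl, if_pos,
      if_neg, one_ne_zero, not_false_eq_true] <;> linarith

variable {n m : ℕ}

def pairRead (c : Fin n → ZMod 2) : Fin n → Pair := fun i => (c i, c (nxt i))

def shiftTau (w : Fin n → Pair) (t : Fin n → Pair → ℝ) : Fin n → Pair → ℝ :=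
  fun i ab => t i (ab + w i)

lemma shiftTau_shiftTau (w : Fin n → Pair) (t : Fin n → Pair → ℝ) :
    shiftTau w (shiftTau w t) = t := by
  funext i ab
  simp only [shiftTau, add_assoc, ZModModule.add_self, add_zero]

lemma sum_shiftTau (w : Fin n → Pair) (t : Fin n → Pair → ℝ) (i : Fin n) :
    ∑ ab, shiftTau w t i ab = ∑ ab, t i ab :=
  Equiv.sum_comp (Equiv.addRight (w i)) (t i)

lemma shiftTau_pairRead_indic (x : Fin n → ZMod 2) :
    shiftTau (pairRead x) (indic x) = indic 0 := by
  funext i ab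
  simp [shiftTau, indic, pairRead, eq_comm, Prod.mk_zero_zero]

lemma chan_add_add (p : ℝ) (u v w : Pair) : chan p (u + w) (v + w) = chan p u v := by
  simp only [chan, add_left_inj]

lemma innerP_Lam_add_shiftTau (p : ℝ) (y w : Fin n → Pair) (t : Fin n → Pair → ℝ) :
    innerP (Lam p fun i => y i + w i) (shiftTau w t) = innerP (Lam p y) t := by
  refine Finset.sum_congr rfl fun i _ => ?_
  rw [← Equiv.sum_comp (Equiv.addRight (w i))]
  simp only [Equiv.coe_addRight, Lam, shiftTau, chan_add_add, add_assoc, ZModModule.add_self,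
    add_zero]

noncomputable def bitFlip (c : Fin n → ZMod 2) : (Fin n → ℝ) →ᵃ[ℝ] (Fin n → ℝ) where
  toFun v i := if c i = 0 then v i else 1 - v i
  linear := LinearMap.pi fun i => if c i = 0 then LinearMap.proj i else -LinearMap.proj i
  map_vadd' q v := by
    funext i
    simp only [vadd_eq_add, Pi.add_apply, LinearMap.pi_apply]
    split_ifs
    · rfl
    · simp only [LinearMap.neg_apply, LinearMap.proj_apply]
      ring

lemma bitFlip_apply (c : Fin n → ZMod 2) (v : Fin n → ℝ) (i : Fin n) :
    bitFlip c v i = if c i = 0 then v i else 1 - v i := rfl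

lemma bitFlip_involutive (c : Fin n → ZMod 2) : Function.Involutive (bitFlip c) := by
  intro v
  funext i
  simp only [bitFlip_apply]
  split_ifs <;> ring

lemma emb_zero : emb (0 : Fin n → ZMod 2) = 0 := funext fun _ => by simp [emb]

lemma bitFlip_emb (c z : Fin n → ZMod 2) : bitFlip c (emb z) = emb (z + c) :=
  funext fun i => (zmod_two_val_add_cast (z i) (c i)).symm

lemma bitFlip_zero (c : Fin n → ZMod 2) : bitFlip c 0 = emb c := by
  simpa [emb_zero] using bitFlip_emb c 0

lemma bitFlip_emb_self (c : Fin n → ZMod 2) : bitFlip c (emb c) = 0 := by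
  rw [bitFlip_emb, ZModModule.add_self, emb_zero]

lemma add_mem_localCode {H : Fin m → Fin n → ZMod 2} {j : Fin m} {z c : Fin n → ZMod 2}
    (hz : z ∈ localCode H j) (hc : c ∈ localCode H j) : z + c ∈ localCode H j := by
  simp only [localCode, Set.mem_ofPred_eq, Pi.add_apply, mul_add, Finset.sum_add_distrib] at *
  rw [hz, hc, add_zero]

lemma bitFlip_mem_fundPolytope {H : Fin m → Fin n → ZMod 2} {c : Fin n → ZMod 2}
    {v : Fin n → ℝ} (hc : c ∈ code H) (hv : v ∈ fundPolytope H) :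
    bitFlip c v ∈ fundPolytope H := by
  simp only [fundPolytope, Set.mem_iInter] at hv ⊢
  intro j
  have himage : bitFlip c '' (emb '' localCode H j) ⊆ emb '' localCode H j := by
    rintro _ ⟨_, ⟨z, hz, rfl⟩, rfl⟩
    exact ⟨z + c, add_mem_localCode hz (hc j), (bitFlip_emb c z).symm⟩
  apply convexHull_mono himage
  rw [← AffineMap.image_convexHull]
  exact Set.mem_image_of_mem _ (hv j)

lemma bitFlip_shiftTau_mem_feasible {H : Fin m → Fin n → ZMod 2} {c : Fin n → ZMod 2}
    {v : Fin n → ℝ} {t : Fin n → Pair → ℝ} (hc : c ∈ code H) (h : (v, t) ∈ feasible H) :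
    (bitFlip c v, shiftTau (pairRead c) t) ∈ feasible H := by
  obtain ⟨hbox, hsum, hfst, hsnd, hQ⟩ := h
  dsimp only at hbox hsum hfst hsnd hQ
  refine ⟨fun i ab => hbox i _, fun i => (sum_shiftTau _ _ i).trans (hsum i), fun i => ?_,
    fun i => ?_, bitFlip_mem_fundPolytope hc hQ⟩
  · dsimp only
    rw [bitFlip_apply, hfst i]
    exact (fst_marginal_add (hsum i) (pairRead c i)).symm
  · dsimp only
    rw [bitFlip_apply, hsnd i]
    exact (snd_marginal_add (hsum i) (pairRead c i)).symm

theorem stmt9_general {n m : ℕ} (H : Fin m → Fin n → ZMod 2)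
    (p : ℝ)
    (x : Fin n → ZMod 2) (hx : x ∈ code H)
    (y : Fin n → Pair) :
    (∀ xf tf, (xf, tf) ∈ feasible H → xf ≠ emb x →
      ∃ xr tr, (xr, tr) ∈ feasible H ∧ xr ≠ 0 ∧
        innerP (Lam p y) tf - innerP (Lam p y) (indic x) =
          innerP (Lam p (fun i => y i + (x i, x (nxt i)))) tr -
            innerP (Lam p (fun i => y i + (x i, x (nxt i)))) (indic 0)) ∧
    (∀ xr tr, (xr, tr) ∈ feasible H → xr ≠ 0 →
      ∃ xf tf, (xf, tf) ∈ feasible H ∧ xf ≠ emb x ∧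
        innerP (Lam p (fun i => y i + (x i, x (nxt i)))) tr -
            innerP (Lam p (fun i => y i + (x i, x (nxt i)))) (indic 0) =
          innerP (Lam p y) tf - innerP (Lam p y) (indic x)) := by
  have hcost : ∀ t, innerP (Lam p fun i => y i + (x i, x (nxt i))) (shiftTau (pairRead x) t) =
      innerP (Lam p y) t := innerP_Lam_add_shiftTau p y (pairRead x)
  have hcost₀ : innerP (Lam p fun i => y i + (x i, x (nxt i))) (indic 0) =
      innerP (Lam p y) (indic x) := by
    rw [← hcost, shiftTau_pairRead_indic]
  refine ⟨fun xf tf hf hne => ⟨bitFlip x xf, shiftTau (pairRead x) tf,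
      bitFlip_shiftTau_mem_feasible hx hf, ?_, by rw [hcost, hcost₀]⟩,
    fun xr tr hr hne => ⟨bitFlip x xr, shiftTau (pairRead x) tr,
      bitFlip_shiftTau_mem_feasible hx hr, ?_,
      by rw [← hcost (shiftTau _ tr), shiftTau_shiftTau, hcost₀]⟩⟩
  · rwa [← bitFlip_emb_self x, (bitFlip_involutive x).injective.ne_iff]
  · rwa [← bitFlip_zero x, (bitFlip_involutive x).injective.ne_iff]

/-- correspondence between feasible solutions with `x^f ≠ x` and feasible
solutions with `x^r ≠ 0` preserving the cost differences. -/
theorem stmt9 {n m : ℕ} (hn : 2 ≤ n) (H : Fin m → Fin n → ZMod 2)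
    (p : ℝ) (hp0 : 0 < p) (hp1 : p < 3 / 4)
    (x : Fin n → ZMod 2) (hx : x ∈ code H)
    (y : Fin n → Pair) :
    (∀ xf tf, (xf, tf) ∈ feasible H → xf ≠ emb x →
      ∃ xr tr, (xr, tr) ∈ feasible H ∧ xr ≠ 0 ∧
        innerP (Lam p y) tf - innerP (Lam p y) (indic x) =
          innerP (Lam p (fun i => y i + (x i, x (nxt i)))) tr -
            innerP (Lam p (fun i => y i + (x i, x (nxt i)))) (indic 0)) ∧
    (∀ xr tr, (xr, tr) ∈ feasible H → xr ≠ 0 →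
      ∃ xf tf, (xf, tf) ∈ feasible H ∧ xf ≠ emb x ∧
        innerP (Lam p (fun i => y i + (x i, x (nxt i)))) tr -
            innerP (Lam p (fun i => y i + (x i, x (nxt i)))) (indic 0) =
          innerP (Lam p y) tf - innerP (Lam p y) (indic x)) :=
  stmt9_general H p x hx y
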